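/- The function u₋(x) = ψ₀(1 + 2sinh²α/(1 − cosh α·cosh(Ax))) satisfies the ordinary differential equation −u'' + u − 2u³ = h on ℝ, where h = √2·cosh²α/(1+2cosh²α)^{3/2}. -/

import Mathlib

/-! With `f = 1 / (1 - c cosh (A x))` one has `f' = c A sinh (A x) f²`, and eliminating
`cosh (A x)` through `c cosh (A x) f = f - 1` turns `f''` into the cubic
`A² (f - 3 f² - 2 (c² - 1) f³)`. Since `u₋ = ψ₀ (1 + 2 sinh² α f)` with `A = 2 sinh α ψ₀` and
`h = 4 cosh² α ψ₀³`, the equation becomes a polynomial identity in `f`, which holds because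
`2 (1 + 2 cosh² α) ψ₀² = 1`. -/

open Real

noncomputable def invOneSubCosh (c A x : ℝ) : ℝ := (1 - c * cosh (A * x))⁻¹

section invOneSubCosh

variable {c A : ℝ}

theorem hasDerivAt_invOneSubCosh {x : ℝ} (hx : 1 - c * cosh (A * x) ≠ 0) :
    HasDerivAt (invOneSubCosh c A) (c * A * sinh (A * x) * invOneSubCosh c A x ^ 2) x := by
  have hcosh := ((((hasDerivAt_id' x).const_mul A).cosh).const_mul c).const_sub 1
  refine (hcosh.inv hx).congr_deriv ?_
  simp only [invOneSubCosh]
  field_simp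

theorem contDiff_invOneSubCosh {n : WithTop ℕ∞} (hden : ∀ x, 1 - c * cosh (A * x) ≠ 0) :
    ContDiff ℝ n (invOneSubCosh c A) :=
  (contDiff_const.sub (contDiff_const.mul (contDiff_cosh.comp (contDiff_const.mul contDiff_id)))).inv
    hden

theorem deriv_invOneSubCosh (hden : ∀ x, 1 - c * cosh (A * x) ≠ 0) :
    deriv (invOneSubCosh c A) = fun x => c * A * sinh (A * x) * invOneSubCosh c A x ^ 2 :=
  funext fun x => (hasDerivAt_invOneSubCosh (hden x)).deriv

theorem deriv_deriv_invOneSubCosh (hden : ∀ x, 1 - c * cosh (A * x) ≠ 0) (x : ℝ) :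
    deriv (deriv (invOneSubCosh c A)) x = A ^ 2 * (invOneSubCosh c A x
      - 3 * invOneSubCosh c A x ^ 2 - 2 * (c ^ 2 - 1) * invOneSubCosh c A x ^ 3) := by
  have hsinh := ((hasDerivAt_id' x).const_mul A).sinh.const_mul (c * A)
  rw [deriv_invOneSubCosh hden, (hsinh.fun_mul ((hasDerivAt_invOneSubCosh (hden x)).fun_pow 2)).deriv]
  have hf : c * cosh (A * x) * invOneSubCosh c A x = invOneSubCosh c A x - 1 := by
    simp only [invOneSubCosh]
    field_simp [hden x]
    ring
  set f := invOneSubCosh c A x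
  linear_combination (A ^ 2 * f * (1 + 2 * (c * cosh (A * x) * f + f - 1))) * hf
    - (2 * c ^ 2 * A ^ 2 * f ^ 3) * cosh_sq (A * x)

end invOneSubCosh

theorem sqrt_two_mul_div_sqrt (a t : ℝ) : √2 * a / √t = 2 * a * (1 / √(2 * t)) := by
  rw [sqrt_mul zero_le_two]
  by_cases ht : √t = 0
  · simp [ht]
  · field_simp
    rw [sq_sqrt zero_le_two]
    ring

theorem rpow_three_div_two_eq_sqrt_pow {t : ℝ} (ht : 0 ≤ t) : t ^ ((3 : ℝ) / 2) = √t ^ 3 := by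
  rw [sqrt_eq_rpow, ← rpow_natCast, ← rpow_mul ht]
  norm_num

theorem sqrt_two_mul_div_rpow_three_halves (a : ℝ) {t : ℝ} (ht : 0 ≤ t) :
    √2 * a / t ^ ((3 : ℝ) / 2) = 4 * a * (1 / √(2 * t)) ^ 3 := by
  rw [rpow_three_div_two_eq_sqrt_pow ht, sqrt_mul zero_le_two]
  by_cases ht : √t = 0
  · simp [ht]
  · field_simp
    rw [show √2 ^ 4 = (√2 ^ 2) ^ 2 by ring, sq_sqrt zero_le_two]
    ring

theorem two_mul_mul_one_div_sqrt_sq {t : ℝ} (ht : 0 < t) : 2 * t * (1 / √(2 * t)) ^ 2 = 1 := by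
  rw [div_pow, sq_sqrt (by positivity)]
  field_simp

theorem stmt8 (α : ℝ) (hα : 0 < α) :
    let ψ₀ : ℝ := 1 / Real.sqrt (2 * (1 + 2 * Real.cosh α ^ 2))
    let A : ℝ := Real.sqrt 2 * Real.sinh α / Real.sqrt (1 + 2 * Real.cosh α ^ 2)
    let h : ℝ := Real.sqrt 2 * Real.cosh α ^ 2 / (1 + 2 * Real.cosh α ^ 2) ^ ((3 : ℝ) / 2)
    let u : ℝ → ℝ := fun x =>
      ψ₀ * (1 + 2 * Real.sinh α ^ 2 / (1 - Real.cosh α * Real.cosh (A * x)))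
    ContDiff ℝ 2 u ∧ ∀ x : ℝ, -(deriv (deriv u)) x + u x - 2 * u x ^ 3 = h := by
  intro ψ₀ A h u
  have hden (x : ℝ) : 1 - cosh α * cosh (A * x) ≠ 0 := by
    nlinarith [one_lt_cosh.2 hα.ne', one_le_cosh (A * x)]
  have hu : u = fun x => ψ₀ * (1 + 2 * sinh α ^ 2 * invOneSubCosh (cosh α) A x) := by
    simp only [u, invOneSubCosh, div_eq_mul_inv]
  have hψ₀ : 2 * (1 + 2 * cosh α ^ 2) * ψ₀ ^ 2 = 1 := two_mul_mul_one_div_sqrt_sq (by positivity)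
  have hA : A = 2 * sinh α * ψ₀ := sqrt_two_mul_div_sqrt _ _
  have hh : h = 4 * cosh α ^ 2 * ψ₀ ^ 3 := sqrt_two_mul_div_rpow_three_halves _ (by positivity)
  have hf := contDiff_invOneSubCosh (n := 2) hden
  refine ⟨hu ▸ by fun_prop, fun x => ?_⟩
  simp only [hu, deriv_const_mul_field', deriv_const_add']
  rw [deriv_deriv_invOneSubCosh hden]
  generalize invOneSubCosh (cosh α) A x = F
  clear_value u ψ₀ A h
  subst hA hh
  linear_combination (-ψ₀ * (1 + 2 * sinh α ^ 2 * F)) * hψ₀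
    + (8 * ψ₀ ^ 3 * sinh α ^ 2 * F * (1 + 2 * sinh α ^ 2 * F ^ 2)) * cosh_sq α
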